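/- Let q be a prime power, n a positive integer, and f ∈ F_q[x] a monic divisor of x^n − 1 of degree k ≥ 1. Let η be a nontrivial multiplicative character of F_{q^n} (extended by η(0) = 0). Then |Σ_{c ∈ F_{q^n}} η(L_f(c))| ≤ (q^k − 1) · q^{n/2}. -/

import Mathlib

open Polynomial

/-- The `q`-associate of `f` applied to `x`: `L_f(x) = Σᵢ aᵢ x^(q^i)`. -/
noncomputable def qAssoc (q : ℕ) {F E : Type*} [CommSemiring F] [CommSemiring E] [Algebra F E]
    (f : Polynomial F) (x : E) : E :=
  f.sum fun i a => algebraMap F E a * x ^ q ^ i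

/-- `g` is the `F_q`-order of `α`: `g` is the monic generator of the ideal of
polynomials `f` with `L_f(α) = 0`. -/
def IsFqOrder (q : ℕ) {F E : Type*} [CommSemiring F] [CommSemiring E] [Algebra F E]
    (α : E) (g : Polynomial F) : Prop :=
  g.Monic ∧ ∀ f : Polynomial F, qAssoc q f α = 0 ↔ g ∣ f

/-- `α` is `k`-normal over `F`: the span of the conjugates `α^(q^i)`, `0 ≤ i ≤ n-1`,
has dimension `n - k`. -/
def IskNormal (q n k : ℕ) (F : Type*) {E : Type*} [Field F] [Field E] [Algebra F E]
    (α : E) : Prop :=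
  Module.finrank F (Submodule.span F (Set.range fun i : Fin n => α ^ q ^ (i : ℕ))) = n - k

/-- `α` is a primitive element of the finite field `E`: it generates `Eˣ`. -/
def IsPrimitiveElt {E : Type*} [Field E] (α : E) : Prop :=
  ∀ x : E, x ≠ 0 → ∃ m : ℕ, x = α ^ m

-- Number of squarefree divisors of a natural number.
open Classical in
noncomputable def Wnat (t : ℕ) : ℕ := (t.divisors.filter Squarefree).card

/-- Number of monic squarefree divisors of a polynomial. -/
noncomputable def Wpoly {F : Type*} [Field F] (g : Polynomial F) : ℕ :=
  Set.ncard {h : Polynomial F | h.Monic ∧ Squarefree h ∧ h ∣ g}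

/-- Polynomial Euler function `Φ(g) = |(F[x]/⟨g⟩)ˣ|`. -/
noncomputable def PhiPoly {F : Type*} [Field F] (g : Polynomial F) : ℕ :=
  Nat.card ((Polynomial F ⧸ Ideal.span {g})ˣ)

-- The polynomial Möbius function over `F`.
open Classical in
noncomputable def muq {F : Type*} [Field F] (f : Polynomial F) : ℤ :=
  if Squarefree f then
    (-1) ^ (UniqueFactorizationMonoid.normalizedFactors f).toFinset.card
  else 0

/-- The `q`-associate of `f` as a polynomial with coefficients in the extension `E`. -/
noncomputable def LPoly (q : ℕ) {F : Type*} (E : Type*) [CommSemiring F] [CommSemiring E]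
    [Algebra F E] (f : Polynomial F) : Polynomial E :=
  f.sum fun i a => Polynomial.C (algebraMap F E a) * Polynomial.X ^ q ^ i

-- `Ψ_f = ∏_{α : m_α = f} (X - α)` over `E`.
open Classical in
noncomputable def PsiPoly (q : ℕ) {F : Type*} (E : Type*) [Field F] [Field E] [Fintype E]
    [Algebra F E] (f : Polynomial F) : Polynomial E :=
  ∏ α ∈ Finset.univ.filter (fun α : E => IsFqOrder q α f), (X - C α)

/-- `n` is `F_q`-practical: `x^n - 1` has a divisor of each degree `1 ≤ k ≤ n-1` over `F`. -/
def FqPractical (F : Type*) [Field F] (n : ℕ) : Prop :=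
  ∀ k : ℕ, 1 ≤ k → k ≤ n - 1 →
    ∃ f : Polynomial F, f.natDegree = k ∧ f ∣ (X ^ n - 1 : Polynomial F)

/-!
`L_f` is `F`-linear, being a combination of iterates of the `q`-Frobenius, and its kernel
consists of roots of the linearized polynomial `Σᵢ aᵢ X^(q^i)` of degree `q^k`, so it has at
most `q^k` elements. For an additive endomorphism `L` of `E` and a primitive additive character
`ψ`, Fourier inversion writes `Σ_c η(L c)` as the sum of the Gauss sums `G(η, ψ(-b ·))` over the
`b` with `ψ(b · L(E)) = 1`. There are exactly `|ker L|` such `b`; the term `b = 0` vanishes because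
`η ≠ 1`, and every other term has absolute value `√|E| = q^(n/2)`.
-/

open Finset

section CharacterSum

variable {E : Type*} [Field E] [Fintype E]

lemma norm_gaussSum_eq_sqrt_card {η : MulChar E ℂ} (hη : η ≠ 1) {ψ : AddChar E ℂ}
    (hψ : ψ.IsPrimitive) : ‖gaussSum η ψ‖ = √(Fintype.card E) := by
  have h : ((‖gaussSum η ψ‖ ^ 2 : ℝ) : ℂ) = (Fintype.card E : ℝ) := by
    rw [Complex.ofReal_pow, ← Complex.mul_conj', ← Complex.star_def, star_gaussSum_eq,
      gaussSum_mul_gaussSum_eq_card hη hψ, Complex.ofReal_natCast]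
  rw [← Complex.ofReal_inj.mp h, Real.sqrt_sq (norm_nonneg _)]

open Classical in
noncomputable def rangeAnnihilator (ψ : AddChar E ℂ) (L : E →+ E) : Finset E :=
  {b | ∀ c, ψ (b * L c) = 1}

open Classical in
lemma sum_apply_mul_eq_ite (ψ : AddChar E ℂ) (L : E →+ E) (b : E) :
    ∑ c, ψ (b * L c) = if b ∈ rangeAnnihilator ψ L then (Fintype.card E : ℂ) else 0 := by
  simp only [rangeAnnihilator, mem_filter, mem_univ, true_and]
  split_ifs with hb
  · simp [hb]
  · refine AddChar.sum_eq_zero_of_ne_one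
      (ψ := ψ.compAddMonoidHom ((AddMonoidHom.mulLeft b).comp L)) fun h => hb fun c => ?_
    simpa using DFunLike.congr_fun h c

variable [DecidableEq E] {ψ : AddChar E ℂ}

lemma sum_comp_eq_sum_rangeAnnihilator (hψ : ψ.IsPrimitive) (L : E →+ E) (φ : E → ℂ) :
    ∑ c, φ (L c) = ∑ b ∈ rangeAnnihilator ψ L, ∑ y, φ y * ψ (-b * y) := by
  have hcard : (Fintype.card E : ℂ) ≠ 0 := by exact_mod_cast Fintype.card_ne_zero
  refine mul_left_cancel₀ hcard ?_
  calc (Fintype.card E : ℂ) * ∑ c, φ (L c)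
      = ∑ c, ∑ y, φ y * ∑ b, ψ (b * (L c - y)) := by
        rw [mul_sum]
        refine sum_congr rfl fun c _ => ?_
        simp only [AddChar.sum_mulShift _ hψ, sub_eq_zero, Nat.cast_ite, Nat.cast_zero, mul_ite,
          mul_zero, sum_ite_eq, mem_univ, if_true, mul_comm]
    _ = ∑ c, ∑ y, ∑ b, ψ (b * L c) * (φ y * ψ (-b * y)) := by
        refine sum_congr rfl fun c _ => sum_congr rfl fun y _ => ?_
        rw [mul_sum]
        refine sum_congr rfl fun b _ => ?_
        rw [mul_sub, sub_eq_add_neg, AddChar.map_add_eq_mul, neg_mul]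
        ring
    _ = ∑ b, (∑ c, ψ (b * L c)) * ∑ y, φ y * ψ (-b * y) := by
        simp only [sum_mul, mul_sum]
        rw [sum_comm]
        exact (sum_congr rfl fun y _ => sum_comm).trans sum_comm
    _ = _ := by
        simp_rw [sum_apply_mul_eq_ite, ite_mul, zero_mul, ← sum_filter, ← mul_sum]
        congr 2
        ext b; simp

lemma card_rangeAnnihilator (hψ : ψ.IsPrimitive) (L : E →+ E) :
    #(rangeAnnihilator ψ L) = #{c | L c = 0} := by
  have h := sum_comp_eq_sum_rangeAnnihilator hψ L fun y => if y = 0 then 1 else 0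
  simp only [ite_mul, one_mul, zero_mul, sum_ite_eq', mem_univ, if_true, mul_zero,
    AddChar.map_zero_eq_one, sum_const, nsmul_one] at h
  rw [sum_boole] at h
  exact_mod_cast h.symm

lemma norm_sum_mulChar_comp_le {η : MulChar E ℂ} (hη : η ≠ 1) (L : E →+ E) :
    ‖∑ c, η (L c)‖ ≤ ((#{c | L c = 0} : ℝ) - 1) * √(Fintype.card E) := by
  set ψ := AddChar.FiniteField.primitiveChar_to_Complex E
  have hψ : ψ.IsPrimitive := AddChar.FiniteField.primitiveChar_to_Complex_isPrimitive E
  set B := rangeAnnihilator ψ L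
  have h0 : (0 : E) ∈ B := by simp [B, rangeAnnihilator]
  have hsum : ∑ c, η (L c) = ∑ b ∈ B.erase 0, gaussSum η (ψ.mulShift (-b)) := by
    rw [sum_comp_eq_sum_rangeAnnihilator hψ, ← add_sum_erase _ _ h0]
    simp only [neg_zero, zero_mul, AddChar.map_zero_eq_one, mul_one,
      MulChar.sum_eq_zero_of_ne_one hη, zero_add]
    rfl
  have hnorm : ∀ b ∈ B.erase 0, ‖gaussSum η (ψ.mulShift (-b))‖ = √(Fintype.card E) :=
    fun b hb => norm_gaussSum_eq_sqrt_card hη <|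
      AddChar.IsPrimitive.of_ne_one <| hψ <| neg_ne_zero.mpr <| ne_of_mem_erase hb
  calc ‖∑ c, η (L c)‖ ≤ ∑ b ∈ B.erase 0, ‖gaussSum η (ψ.mulShift (-b))‖ :=
        hsum ▸ norm_sum_le _ _
    _ = ((#{c | L c = 0} : ℝ) - 1) * √(Fintype.card E) := by
        rw [sum_congr rfl hnorm, sum_const, nsmul_eq_mul, card_erase_of_mem h0,
          Nat.cast_pred (card_pos.mpr ⟨0, h0⟩), card_rangeAnnihilator hψ]

end CharacterSum

section qAssociate

variable {F : Type*} [Field F] [Fintype F]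

noncomputable def qAssocLinearMap (E : Type*) [CommRing E] [Algebra F E] (f : F[X]) :
    E →ₗ[F] E :=
  f.sum fun i a => a • (FiniteField.frobeniusAlgHom F E ^ i).toLinearMap

lemma qAssocLinearMap_apply {E : Type*} [CommRing E] [Algebra F E] (f : F[X]) (x : E) :
    qAssocLinearMap E f x = qAssoc (Fintype.card F) f x := by
  simp [qAssocLinearMap, qAssoc, Polynomial.sum_def, AlgHom.coe_pow,
    FiniteField.coe_frobeniusAlgHom, pow_iterate, Algebra.smul_def]

end qAssociate

section LPoly

variable {F E : Type*} [CommSemiring F] [CommSemiring E] [Algebra F E] {q : ℕ}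

lemma eval_LPoly (f : F[X]) (x : E) : (LPoly q E f).eval x = qAssoc q f x := by
  simp [LPoly, qAssoc, Polynomial.sum_def, eval_finsetSum]

lemma coeff_LPoly_pow (hq : 1 < q) (f : F[X]) (i : ℕ) :
    (LPoly q E f).coeff (q ^ i) = algebraMap F E (f.coeff i) := by
  rw [LPoly, Polynomial.sum_def, finsetSum_coeff]
  simp only [coeff_C_mul, coeff_X_pow, (Nat.pow_right_injective hq).eq_iff, mul_ite, mul_one,
    mul_zero, sum_ite_eq, mem_support_iff]
  split_ifs with h
  · rfl
  · rw [notMem_support_iff.mp h, map_zero]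

lemma natDegree_LPoly_le (hq : 0 < q) (f : F[X]) :
    (LPoly q E f).natDegree ≤ q ^ f.natDegree := by
  rw [LPoly, Polynomial.sum_def]
  refine natDegree_sum_le_of_forall_le _ _ fun i hi => (natDegree_C_mul_le _ _).trans <|
    (natDegree_X_pow_le _).trans <| Nat.pow_le_pow_right hq (le_natDegree_of_mem_supp i hi)

end LPoly

lemma card_filter_qAssoc_eq_zero_le {F E : Type*} [Field F] [Field E] [Fintype E]
    [DecidableEq E] [Algebra F E] {q : ℕ} (hq : 1 < q) {f : F[X]} (hf : f ≠ 0) :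
    #{x : E | qAssoc q f x = 0} ≤ q ^ f.natDegree := by
  have hL : LPoly q E f ≠ 0 := fun h => by
    have := coeff_LPoly_pow (E := E) hq f f.natDegree
    rw [h, coeff_zero, eq_comm, map_eq_zero_iff _ (algebraMap F E).injective,
      coeff_natDegree, leadingCoeff_eq_zero] at this
    exact hf this
  refine (card_le_degree_of_subset_roots fun x hx => ?_).trans (natDegree_LPoly_le (by omega) f)
  rw [mem_roots hL, IsRoot, eval_LPoly]
  exact (mem_filter.mp hx).2

theorem stmt17_general {F E : Type*} [Field F] [Fintype F] [Field E] [Fintype E] [Algebra F E]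
    (q n k : ℕ) (hq : Fintype.card F = q) (hdim : Module.finrank F E = n)
    (f : Polynomial F) (hf : f.Monic) (hdeg : f.natDegree = k)
    (η : MulChar E ℂ) (hη : η ≠ 1) :
    ‖∑ c : E, η (qAssoc q f c)‖ ≤
      ((q : ℝ) ^ k - 1) * (q : ℝ) ^ ((n : ℝ) / 2) := by
  classical
  have hq1 : 1 < q := hq ▸ Fintype.one_lt_card
  have hsqrt : √(Fintype.card E : ℝ) = (q : ℝ) ^ ((n : ℝ) / 2) := by
    rw [Module.card_eq_pow_finrank (K := F), hq, hdim, Real.sqrt_eq_rpow, Nat.cast_pow,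
      ← Real.rpow_natCast, ← Real.rpow_mul (Nat.cast_nonneg q), mul_one_div]
  have hker : (#{c : E | qAssoc q f c = 0} : ℝ) ≤ (q : ℝ) ^ k := by
    exact_mod_cast hdeg ▸ card_filter_qAssoc_eq_zero_le (E := E) hq1 hf.ne_zero
  have hbound := norm_sum_mulChar_comp_le hη (qAssocLinearMap E f).toAddMonoidHom
  simp only [LinearMap.toAddMonoidHom_coe, qAssocLinearMap_apply, hq] at hbound
  rw [← hsqrt]
  exact hbound.trans (by gcongr)

/-- For a nontrivial multiplicative character `η` of `F_{q^n}` and a monic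
divisor `f` of `x^n - 1` of degree `k ≥ 1`, `|Σ_c η(L_f(c))| ≤ (q^k - 1) q^{n/2}`. -/
theorem stmt17 {F E : Type*} [Field F] [Fintype F] [Field E] [Fintype E] [Algebra F E]
    (q n k : ℕ) (hq : Fintype.card F = q) (hn : 0 < n) (hdim : Module.finrank F E = n)
    (f : Polynomial F) (hf : f.Monic) (hdeg : f.natDegree = k) (hk : 1 ≤ k)
    (hfd : f ∣ (X ^ n - 1 : Polynomial F))
    (η : MulChar E ℂ) (hη : η ≠ 1) :
    ‖∑ c : E, η (qAssoc q f c)‖ ≤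
      ((q : ℝ) ^ k - 1) * (q : ℝ) ^ ((n : ℝ) / 2) :=
  stmt17_general q n k hq hdim f hf hdeg η hη
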